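/- arXiv:1707.09171 — 2 statements merged into one kernel-verified Lean document; each statement's English description precedes it below -/
import Mathlib

section
/- Let X be a two-dimensional real normed space and 0 < ρ < 1. For any u in the unit sphere S, there exists a unique u* ∈ S with u ≺ u* (u precedes u* in the counterclockwise orientation, with the chord on the positive side) such that the segment [u, u*] supports the sphere ρS, i.e., inf_{t∈[0,1]} ‖(1−t)u + t u*‖ = ρ. -/
open Real Set

/-- `N` is a norm on the two-dimensional real vector space `ℝ × ℝ`. -/
def IsNorm (N : ℝ × ℝ → ℝ) : Prop :=
  (∀ x, N x = 0 ↔ x = 0) ∧ (∀ (a : ℝ) (x : ℝ × ℝ), N (a • x) = |a| * N x) ∧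
    ∀ x y, N (x + y) ≤ N x + N y

/-- The 2D cross product `u ∧ v`; `u ≺ v` means `0 < wedge u v`. -/
def wedge (u v : ℝ × ℝ) : ℝ := u.1 * v.2 - u.2 * v.1

/-- `inf_{t ∈ [0,1]} N ((1−t)u + tv)`, the minimal `N`-norm on the segment `[u,v]`. -/
noncomputable def segInf (N : ℝ × ℝ → ℝ) (u v : ℝ × ℝ) : ℝ :=
  sInf ((fun t : ℝ => N ((1 - t) • u + t • v)) '' Icc (0:ℝ) 1)

/-- Property (P-ρS): every chord of the unit sphere of `N` that supports `ρS`
touches `ρS` at its midpoint. -/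
def PropP (N : ℝ × ℝ → ℝ) (ρ : ℝ) : Prop :=
  ∀ u v : ℝ × ℝ, N u = 1 → N v = 1 → segInf N u v = ρ →
    N ((1/2 : ℝ) • u + (1/2 : ℝ) • v) = ρ

/-! For a norm `N`, the function `t ↦ N ((1 - t) • u + t • v)` is convex; so if `[u, v]` supports
`ρS` with `ρ < 1`, the minimum is attained inside the segment and is a minimum on the whole line
through `u` and `v`.

Existence: move `w` along the unit sphere from `u` to `-u` through the half-plane `u ≺ w`
(normalised rotations of `u`). Then `segInf N u w` varies continuously from `1` to `0`, and takes
the value `ρ`.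

Uniqueness: if `[u, w]` and `[u, w']` both support `ρS`, the line through `u` and `w'` misses the
open ball `ρB`, so `ρB` lies on the origin's side of that line. The point where `[u, w]` touches
`ρS` then puts `w` on the line. The convex function along it equals `1` at `u` and `w'` and is
smaller in between, so it takes the value `1` nowhere else, and `w = w'`. -/

namespace IsNorm

variable {N : ℝ × ℝ → ℝ}

def toSeminorm (hN : IsNorm N) : Seminorm ℝ (ℝ × ℝ) :=
  Seminorm.of N hN.2.2 fun a x => by rw [hN.2.1, Real.norm_eq_abs]

lemma nonneg (hN : IsNorm N) (x : ℝ × ℝ) : 0 ≤ N x := apply_nonneg hN.toSeminorm x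

lemma map_neg (hN : IsNorm N) (x : ℝ × ℝ) : N (-x) = N x := map_neg_eq_map hN.toSeminorm x

lemma convexOn (hN : IsNorm N) : ConvexOn ℝ univ N := hN.toSeminorm.convexOn

lemma continuous (hN : IsNorm N) : Continuous N :=
  continuousOn_univ.mp (hN.convexOn.continuousOn isOpen_univ)

lemma convexOn_segment (hN : IsNorm N) (u v : ℝ × ℝ) :
    ConvexOn ℝ univ fun t : ℝ => N ((1 - t) • u + t • v) := by
  simpa [Function.comp_def, AffineMap.lineMap_apply_module] using
    hN.convexOn.comp_affineMap (AffineMap.lineMap (k := ℝ) u v)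

lemma pos (hN : IsNorm N) {x : ℝ × ℝ} (hx : x ≠ 0) : 0 < N x :=
  (hN.nonneg x).lt_of_ne' (mt (hN.1 x).1 hx)

lemma inv_smul_self (hN : IsNorm N) {x : ℝ × ℝ} (hx : x ≠ 0) : N ((N x)⁻¹ • x) = 1 := by
  rw [hN.2.1, abs_of_pos (inv_pos.mpr (hN.pos hx)), inv_mul_cancel₀ (hN.pos hx).ne']

end IsNorm

lemma ConvexOn.eq_or_eq_of_apply_eq {f : ℝ → ℝ} (hf : ConvexOn ℝ univ f) {a m b c : ℝ}
    (ham : a < m) (hmb : m < b) (hm : f m < f a) (hb : f b = f a) (hc : f c = f a) :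
    c = a ∨ c = b := by
  have hseg {x y z : ℝ} (hxy : x < y) (hyz : y < z) : y ∈ openSegment ℝ x z :=
    Ioo_subset_openSegment ⟨hxy, hyz⟩
  rcases lt_trichotomy c a with hca | rfl | hac
  · linarith [hf.lt_left_of_right_lt trivial trivial (hseg hca ham) hm]
  · exact Or.inl rfl
  rcases lt_trichotomy c m with hcm | rfl | hmc
  · linarith [hf.lt_left_of_right_lt trivial trivial (hseg hac hcm) (hc ▸ hm)]
  · linarith
  rcases lt_trichotomy c b with hcb | rfl | hbc
  · linarith [hf.lt_right_of_left_lt trivial trivial (hseg hmc hcb) (hc ▸ hm)]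
  · exact Or.inr rfl
  · linarith [hf.lt_right_of_left_lt trivial trivial (hseg hmb hbc) (hb ▸ hm)]

section segInf

variable {N : ℝ × ℝ → ℝ} {u v : ℝ × ℝ}

lemma segInf_self : segInf N u u = N u := by
  simp [segInf, ← add_smul, (nonempty_Icc.2 zero_le_one).image_const]

lemma segInf_neg (hN : IsNorm N) : segInf N u (-u) = 0 := by
  refine IsLeast.csInf_eq ⟨⟨1 / 2, by norm_num, ?_⟩, ?_⟩
  · norm_num [(hN.1 0).2 rfl]
  · rintro _ ⟨t, -, rfl⟩
    exact hN.nonneg _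

lemma continuous_segInf (hN : IsNorm N) (u : ℝ × ℝ) : Continuous (segInf N u) :=
  isCompact_Icc.continuous_sInf (f := fun v t => N ((1 - t) • u + t • v))
    (hN.continuous.comp (by fun_prop))

lemma exists_isMin_segment (hN : IsNorm N) (hu : N u = 1) (hv : N v = 1)
    (hlt : segInf N u v < 1) :
    ∃ t ∈ Ioo (0 : ℝ) 1, N ((1 - t) • u + t • v) = segInf N u v ∧
      ∀ s : ℝ, segInf N u v ≤ N ((1 - s) • u + s • v) := by
  set f := fun t : ℝ => N ((1 - t) • u + t • v)
  obtain ⟨t, ht, hmin⟩ := isCompact_Icc.exists_isMinOn (nonempty_Icc.2 zero_le_one)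
    (hN.continuous.comp (by fun_prop : Continuous fun t : ℝ => (1 - t) • u + t • v)).continuousOn
  have heq : segInf N u v = f t :=
    IsLeast.csInf_eq ⟨mem_image_of_mem f ht, by rintro _ ⟨s, hs, rfl⟩; exact hmin hs⟩
  have ht' : t ∈ Ioo (0 : ℝ) 1 := by
    refine ⟨ht.1.lt_of_ne ?_, ht.2.lt_of_ne ?_⟩ <;> rintro rfl <;> simp [f, hu, hv] at heq <;>
      linarith
  refine ⟨t, ht', heq.symm, fun s => heq ▸ ?_⟩
  exact IsMinOn.of_isLocalMin_of_convex_univ (hmin.isLocalMin (Icc_mem_nhds ht'.1 ht'.2))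
    (hN.convexOn_segment u v) s

end segInf

section wedge

lemma wedge_self (u : ℝ × ℝ) : wedge u u = 0 := by
  simp only [wedge]; ring

lemma wedge_swap (u v : ℝ × ℝ) : wedge v u = -wedge u v := by
  simp only [wedge]; ring

lemma wedge_smul_right (c : ℝ) (u v : ℝ × ℝ) : wedge u (c • v) = c * wedge u v := by
  simp only [wedge, Prod.smul_fst, Prod.smul_snd, smul_eq_mul]; ring

lemma exists_eq_lineMap_of_wedge_eq_zero {a b p : ℝ × ℝ} (hab : a ≠ b)
    (h : wedge (b - a) (p - a) = 0) : ∃ c : ℝ, p = (1 - c) • a + c • b := by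
  simp only [wedge, Prod.fst_sub, Prod.snd_sub] at h
  by_cases h1 : b.1 = a.1
  · have h2 : b.2 - a.2 ≠ 0 := sub_ne_zero.2 fun h2 => hab (Prod.ext h1.symm h2.symm)
    refine ⟨(p.2 - a.2) / (b.2 - a.2), Prod.ext ?_ ?_⟩ <;>
      simp only [Prod.smul_fst, Prod.smul_snd, Prod.fst_add, Prod.snd_add, smul_eq_mul] <;>
      field_simp <;> nlinarith
  · have h1 : b.1 - a.1 ≠ 0 := sub_ne_zero.2 h1
    refine ⟨(p.1 - a.1) / (b.1 - a.1), Prod.ext ?_ ?_⟩ <;>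
      simp only [Prod.smul_fst, Prod.smul_snd, Prod.fst_add, Prod.snd_add, smul_eq_mul] <;>
      field_simp <;> nlinarith

end wedge

noncomputable def rotate (θ : ℝ) (u : ℝ × ℝ) : ℝ × ℝ :=
  (cos θ * u.1 - sin θ * u.2, sin θ * u.1 + cos θ * u.2)

lemma rotate_zero (u : ℝ × ℝ) : rotate 0 u = u := by simp [rotate]

lemma rotate_pi (u : ℝ × ℝ) : rotate π u = -u := by ext <;> simp [rotate]

lemma wedge_rotate (θ : ℝ) (u : ℝ × ℝ) : wedge u (rotate θ u) = sin θ * (u.1 ^ 2 + u.2 ^ 2) := by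
  simp only [wedge, rotate]; ring

lemma rotate_ne_zero {u : ℝ × ℝ} (hu : u ≠ 0) (θ : ℝ) : rotate θ u ≠ 0 := by
  intro h
  have h1 := congrArg Prod.fst h
  have h2 := congrArg Prod.snd h
  simp only [rotate, Prod.fst_zero, Prod.snd_zero] at h1 h2
  refine hu (Prod.ext ?_ ?_)
  · show u.1 = 0
    linear_combination cos θ * h1 + sin θ * h2 - u.1 * sin_sq_add_cos_sq θ
  · show u.2 = 0
    linear_combination cos θ * h2 - sin θ * h1 - u.2 * sin_sq_add_cos_sq θ

section supportingChord

variable {N : ℝ × ℝ → ℝ} {ρ : ℝ} {u : ℝ × ℝ}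

lemma exists_unit_wedge_pos_segInf_eq (hN : IsNorm N) (hρ0 : 0 < ρ) (hρ1 : ρ < 1)
    (hu : N u = 1) : ∃ w, N w = 1 ∧ 0 < wedge u w ∧ segInf N u w = ρ := by
  have hu0 : u ≠ 0 := by rintro rfl; simp [(hN.1 0).2 rfl] at hu
  set W : ℝ → ℝ × ℝ := fun θ => (N (rotate θ u))⁻¹ • rotate θ u
  have hR : Continuous fun θ => rotate θ u := by unfold rotate; fun_prop
  have hW : Continuous W :=
    ((hN.continuous.comp hR).inv₀ fun θ => (hN.pos (rotate_ne_zero hu0 θ)).ne').smul hR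
  have hW0 : W 0 = u := by simp only [W, rotate_zero, hu, inv_one, one_smul]
  have hWπ : W π = -u := by simp only [W, rotate_pi, hN.map_neg, hu, inv_one, one_smul]
  have hρmem : ρ ∈ Icc (segInf N u (W π)) (segInf N u (W 0)) := by
    rw [hW0, hWπ, segInf_neg hN, segInf_self, hu]
    exact ⟨hρ0.le, hρ1.le⟩
  obtain ⟨θ, hθ, hFθ⟩ :=
    intermediate_value_Icc' pi_pos.le ((continuous_segInf hN u).comp hW).continuousOn hρmem
  have hθ' : θ ∈ Ioo 0 π := by
    refine ⟨hθ.1.lt_of_ne ?_, hθ.2.lt_of_ne ?_⟩ <;> rintro rfl <;>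
      simp only [Function.comp_apply, hW0, hWπ, segInf_neg hN, segInf_self, hu] at hFθ <;>
      linarith
  refine ⟨W θ, hN.inv_smul_self (rotate_ne_zero hu0 θ), ?_, hFθ⟩
  have hsq : 0 < u.1 ^ 2 + u.2 ^ 2 := by
    rcases u with ⟨a, b⟩
    have : a ≠ 0 ∨ b ≠ 0 := by by_contra! h; exact hu0 (by simp [h])
    rcases this with h | h <;> positivity
  rw [wedge_smul_right, wedge_rotate]
  have := hN.pos (rotate_ne_zero hu0 θ)
  have := sin_pos_of_pos_of_lt_pi hθ'.1 hθ'.2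
  positivity

lemma wedge_sub_nonneg_of_apply_le (hN : IsNorm N) (hρ0 : 0 < ρ) {w q : ℝ × ℝ}
    (hw : 0 < wedge u w) (hline : ∀ s : ℝ, ρ ≤ N ((1 - s) • u + s • w)) (hq : N q ≤ ρ) :
    0 ≤ wedge (w - u) (q - u) := by
  by_contra! hneg
  set A := wedge u w
  set B := wedge (w - u) (q - u)
  -- `s • q` is where the segment `[0, q]` crosses the line through `u` and `w`
  set s := A / (A - B)
  have hs0 : 0 < s := div_pos hw (by linarith)
  have hs1 : s < 1 := (div_lt_one (by linarith)).2 (by linarith)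
  have hsq : wedge (w - u) (s • q - u) = 0 := by
    have : wedge (w - u) (s • q - u) = s * B + (1 - s) * A := by
      simp only [A, B, wedge, Prod.fst_sub, Prod.snd_sub, Prod.smul_fst, Prod.smul_snd,
        smul_eq_mul]
      ring
    rw [this]
    linear_combination -div_mul_cancel₀ A (by linarith : A - B ≠ 0)
  have huw : u ≠ w := by rintro rfl; simp [A, wedge_self] at hw
  obtain ⟨c, hc⟩ := exists_eq_lineMap_of_wedge_eq_zero huw hsq
  have := hline c
  rw [← hc, hN.2.1, abs_of_pos hs0] at this
  nlinarith

lemma eq_of_wedge_sub_nonpos (hN : IsNorm N) (hρ0 : 0 < ρ) (hρ1 : ρ < 1) (hu : N u = 1)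
    {w w' : ℝ × ℝ} (hw : N w = 1 ∧ 0 < wedge u w ∧ segInf N u w = ρ)
    (hw' : N w' = 1 ∧ 0 < wedge u w' ∧ segInf N u w' = ρ)
    (hside : wedge (w' - u) (w - u) ≤ 0) : w = w' := by
  obtain ⟨hw, huw, hs⟩ := hw
  obtain ⟨hw', huw', hs'⟩ := hw'
  obtain ⟨t, ht, hpt, -⟩ := exists_isMin_segment hN hu hw (hs ▸ hρ1)
  obtain ⟨t', ht', hpt', hmin'⟩ := exists_isMin_segment hN hu hw' (hs' ▸ hρ1)
  rw [hs] at hpt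
  rw [hs'] at hpt' hmin'
  have hon : wedge (w' - u) (w - u) = 0 := by
    have h := wedge_sub_nonneg_of_apply_le hN hρ0 huw' hmin' hpt.le
    have : wedge (w' - u) ((1 - t) • u + t • w - u) = t * wedge (w' - u) (w - u) := by
      simp only [wedge, Prod.fst_sub, Prod.snd_sub, Prod.fst_add, Prod.snd_add,
        Prod.smul_fst, Prod.smul_snd, smul_eq_mul]
      ring
    nlinarith [ht.1]
  have huw' : u ≠ w' := by rintro rfl; simp [wedge_self] at huw'
  obtain ⟨c, rfl⟩ := exists_eq_lineMap_of_wedge_eq_zero huw' hon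
  rcases (hN.convexOn_segment u w').eq_or_eq_of_apply_eq (c := c) ht'.1 ht'.2
    (by simp [hpt', hu, hρ1]) (by simp [hu, hw']) (by simp [hu, hw]) with rfl | rfl
  · simp [wedge_self] at huw
  · simp

end supportingChord

/-- For any `u` on the unit sphere of a 2-dimensional normed space and
`0 < ρ < 1`, there is a unique `u* ∈ S` with `u ≺ u*` such that the chord `[u,u*]`
supports `ρS`. -/
theorem stmt_2 (N : ℝ × ℝ → ℝ) (hN : IsNorm N) (ρ : ℝ) (hρ0 : 0 < ρ) (hρ1 : ρ < 1)
    (u : ℝ × ℝ) (hu : N u = 1) :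
    ∃! w : ℝ × ℝ, N w = 1 ∧ 0 < wedge u w ∧ segInf N u w = ρ := by
  obtain ⟨w, hw⟩ := exists_unit_wedge_pos_segInf_eq hN hρ0 hρ1 hu
  refine ⟨w, hw, fun y hy => ?_⟩
  rcases le_total (wedge (w - u) (y - u)) 0 with h | h
  · exact eq_of_wedge_sub_nonpos hN hρ0 hρ1 hu hy hw h
  · refine (eq_of_wedge_sub_nonpos hN hρ0 hρ1 hu hw hy ?_).symm
    rw [wedge_swap]
    linarith
end

section
/- Let X be a two-dimensional real normed space with unit sphere S and 0 < ρ < 1, satisfying property (P-ρS). If u, v ∈ S and the segment [u, v] supports ρS (i.e., inf_{t∈[0,1]}‖(1−t)u + tv‖ = ρ), then u + v is Birkhoff-orthogonal to v − u, i.e., ‖u+v‖ ≤ ‖(u+v) + λ(v−u)‖ for all λ ∈ ℝ. -/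
open Real Set

/-
By (P-ρS) the midpoint of the chord has norm `ρ`, so `‖u + v‖ = 2ρ`. Every point
`u + v + λ(v − u)` is twice a point `(1 − t)u + tv` of the line through `u` and `v`.
On the chord itself such a point has norm at least `ρ` by definition of the infimum;
off the chord the triangle inequality gives norm at least `1 = ‖u‖ ≥ ρ`.
-/

namespace IsNorm

variable {N : ℝ × ℝ → ℝ}

lemma segInf_le (hN : IsNorm N) (u v : ℝ × ℝ) {t : ℝ} (ht : t ∈ Icc (0 : ℝ) 1) :
    segInf N u v ≤ N ((1 - t) • u + t • v) :=
  csInf_le ⟨0, by rintro _ ⟨s, -, rfl⟩; exact hN.nonneg _⟩ ⟨t, ht, rfl⟩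

lemma mul_le_add_of_nonpos (hN : IsNorm N) (u v : ℝ × ℝ) {t : ℝ} (ht : t ≤ 0) :
    (1 - t) * N u ≤ N ((1 - t) • u + t • v) + -t * N v := by
  have h := hN.2.2 ((1 - t) • u + t • v) ((-t) • v)
  rwa [show (1 - t) • u + t • v + (-t) • v = (1 - t) • u by module, hN.2.1, hN.2.1,
    abs_of_nonneg (by linarith), abs_of_nonneg (by linarith)] at h

lemma one_le_of_nonpos (hN : IsNorm N) {u v : ℝ × ℝ} (hu : N u = 1) (hv : N v = 1) {t : ℝ}
    (ht : t ≤ 0) : 1 ≤ N ((1 - t) • u + t • v) := by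
  have h := hN.mul_le_add_of_nonpos u v ht
  rw [hu, hv] at h
  linarith

lemma segInf_le_of_norm_eq_one (hN : IsNorm N) {u v : ℝ × ℝ} (hu : N u = 1) (hv : N v = 1)
    (t : ℝ) : segInf N u v ≤ N ((1 - t) • u + t • v) := by
  have hle_one : segInf N u v ≤ 1 := by
    simpa [hu] using hN.segInf_le u v (t := 0) (by simp)
  rcases le_or_gt t 0 with ht0 | ht0
  · exact hle_one.trans (hN.one_le_of_nonpos hu hv ht0)
  rcases le_or_gt t 1 with ht1 | ht1
  · exact hN.segInf_le u v ⟨ht0.le, ht1⟩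
  · have hswap : (1 - t) • u + t • v = (1 - (1 - t)) • v + (1 - t) • u := by module
    rw [hswap]
    exact hle_one.trans (hN.one_le_of_nonpos hv hu (by linarith))

lemma two_smul_eq (hN : IsNorm N) (x : ℝ × ℝ) : N ((2 : ℝ) • x) = 2 * N x := by
  rw [hN.2.1]; norm_num

end IsNorm

theorem stmt_7_general (N : ℝ × ℝ → ℝ) (hN : IsNorm N) (ρ : ℝ)
    (hP : PropP N ρ) (u v : ℝ × ℝ) (hu : N u = 1) (hv : N v = 1)
    (hsup : segInf N u v = ρ) :
    ∀ l : ℝ, N (u + v) ≤ N ((u + v) + l • (v - u)) := by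
  intro l
  have hmid : N (u + v) = 2 * ρ := by
    rw [show u + v = (2 : ℝ) • ((1 / 2 : ℝ) • u + (1 / 2 : ℝ) • v) by module,
      hN.two_smul_eq, hP u v hu hv hsup]
  have hline : (u + v) + l • (v - u) = (2 : ℝ) • ((1 - (1 + l) / 2) • u + ((1 + l) / 2) • v) := by
    module
  rw [hmid, hline, hN.two_smul_eq, ← hsup]
  linarith [hN.segInf_le_of_norm_eq_one hu hv ((1 + l) / 2)]

/-- Under (P-ρS), if the chord `[u,v]` of `S` supports `ρS`,
then `u + v` is Birkhoff-orthogonal to `v − u`. -/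
theorem stmt_7 (N : ℝ × ℝ → ℝ) (hN : IsNorm N) (ρ : ℝ) (hρ0 : 0 < ρ) (hρ1 : ρ < 1)
    (hP : PropP N ρ) (u v : ℝ × ℝ) (hu : N u = 1) (hv : N v = 1)
    (hsup : segInf N u v = ρ) :
    ∀ l : ℝ, N (u + v) ≤ N ((u + v) + l • (v - u)) :=
  stmt_7_general N hN ρ hP u v hu hv hsup
end
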